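/- Let {D_0,D_1,D_2,D_3} be a difference family of type H in a finite abelian group G of order v such that every x ∈ G∖{0} has coefficient 1 or 3 in D_0+D_1+D_2+D_3 (as an element of ℤ[G], with coefficient of 0 being 0), and each D_i is symmetric, and (d3) holds. Then there exist symmetric subsets E_0, E_1 of G∖{0} with D_0+D_1−D_2−D_3 = E_0 − (G*∖E_0) and D_0+D_3−D_1−D_2 = E_1 − (G*∖E_1), and moreover E_0² + E_1² + (G*∖E_0)² + (G*∖E_1)² = 2(v−1)·0 + (v−3)·G* in ℤ[G], i.e., {E_0, E_1, G*∖E_0, G*∖E_1} is a difference family of type H_4*. -/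

import Mathlib

open Finset

noncomputable section

variable {G : Type*}

/-- The element of the group ring `ℤ[G]` associated to a finite subset `D ⊆ G`. -/
def grp [AddCommGroup G] [DecidableEq G] (D : Finset G) : AddMonoidAlgebra ℤ G :=
  ∑ x ∈ D, AddMonoidAlgebra.single x 1

/-- `D^{(-1)} = {-x : x ∈ D}`. -/
def negSet [AddCommGroup G] [DecidableEq G] (D : Finset G) : Finset G :=
  D.image (fun x => -x)

/-- A subset is symmetric if `D = -D`. -/
def IsSymmetric [AddCommGroup G] [DecidableEq G] (D : Finset G) : Prop :=
  negSet D = D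

/-- `G* = G \ {0}` as a finset. -/
def Gstar (G : Type*) [AddCommGroup G] [Fintype G] [DecidableEq G] : Finset G :=
  Finset.univ \ {0}

/-- A difference family of type `H`: four blocks with `λ = Σ|D_i| - |G|`. -/
def IsTypeH [AddCommGroup G] [Fintype G] [DecidableEq G] (D : Fin 4 → Finset G) : Prop :=
  ∑ i, grp (D i) * grp (negSet (D i)) =
    ((∑ i, ((D i).card : ℤ)) - (Fintype.card G : ℤ)) • grp (Finset.univ : Finset G)
      + (Fintype.card G : ℤ) • AddMonoidAlgebra.single (0 : G) (1 : ℤ)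

/-- A difference family of type `H_4^*`: four blocks with `λ = Σ|B_i| - (|G|+1)`. -/
def IsTypeH4star [AddCommGroup G] [Fintype G] [DecidableEq G] (B : Fin 4 → Finset G) : Prop :=
  ∑ i, grp (B i) * grp (negSet (B i)) =
    ((∑ i, ((B i).card : ℤ)) - ((Fintype.card G : ℤ) + 1)) • grp (Finset.univ : Finset G)
      + ((Fintype.card G : ℤ) + 1) • AddMonoidAlgebra.single (0 : G) (1 : ℤ)

/-- A difference family of type `H_2^*`: two blocks with `λ = Σ|S_i| - (|G|+1)/2`. -/
def IsTypeH2star [AddCommGroup G] [Fintype G] [DecidableEq G] (S : Fin 2 → Finset G) : Prop :=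
  ∑ i, grp (S i) * grp (negSet (S i)) =
    ((∑ i, ((S i).card : ℤ)) - ((Fintype.card G : ℤ) + 1) / 2) • grp (Finset.univ : Finset G)
      + (((Fintype.card G : ℤ) + 1) / 2) • AddMonoidAlgebra.single (0 : G) (1 : ℤ)

/-- Condition (d3). -/
def CondD3 [AddCommGroup G] [Fintype G] [DecidableEq G] (D : Fin 4 → Finset G) : Prop :=
  grp (D 0) * grp (negSet (D 2)) + grp (D 2) * grp (negSet (D 0))
    + grp (D 1) * grp (negSet (D 3)) + grp (D 3) * grp (negSet (D 1)) =
    ((∑ i, ((D i).card : ℤ)) - (Fintype.card G : ℤ) + 1) • grp (Finset.univ : Finset G)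

/-- Condition (c1). -/
def CondC1 [AddCommGroup G] [Fintype G] [DecidableEq G] (S : Fin 4 → Finset G) : Prop :=
  grp (S 0) * grp (negSet (S 2)) + grp (S 2) * grp (negSet (S 0))
    + grp (S 1) * grp (negSet (S 3)) + grp (S 3) * grp (negSet (S 1)) =
    ((∑ i, ((S i).card : ℤ)) - (Fintype.card G : ℤ)) • grp (Finset.univ : Finset G)

/-- Condition (d2). -/
def CondD2 [AddCommGroup G] [Fintype G] [DecidableEq G] (D : Fin 4 → Finset G) : Prop :=
  ∃ E₀ E₁ : Finset G, E₀ ⊆ Gstar G ∧ E₁ ⊆ Gstar G ∧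
    grp (D 0) + grp (D 1) - grp (D 2) - grp (D 3) = grp E₀ - grp (Gstar G \ E₀) ∧
    grp (D 0) + grp (D 3) - grp (D 1) - grp (D 2) = grp E₁ - grp (Gstar G \ E₁) ∧
    IsTypeH4star ![E₀, E₁, Gstar G \ E₀, Gstar G \ E₁]

/-- A building family: eight symmetric, pairwise disjoint subsets partitioning `G*`,
satisfying (a3) and (a4). -/
def IsBuildingFamily [AddCommGroup G] [Fintype G] [DecidableEq G] (A : Fin 8 → Finset G) : Prop :=
  (∀ i, IsSymmetric (A i)) ∧
  (∀ i j, i ≠ j → Disjoint (A i) (A j)) ∧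
  (Finset.univ.biUnion A = Gstar G) ∧
  IsTypeH4star ![A 0 ∪ A 1 ∪ A 6 ∪ A 7, A 2 ∪ A 3 ∪ A 4 ∪ A 5,
    A 0 ∪ A 3 ∪ A 5 ∪ A 6, A 1 ∪ A 2 ∪ A 4 ∪ A 7] ∧
  (∑ i, grp (A i) * grp (A i)) - (∑ i, grp (A i) * grp (A (i + 4))) =
    ((Fintype.card G : ℤ) - 1) • AddMonoidAlgebra.single (0 : G) (1 : ℤ)
      + ((grp (A 0) + grp (A 1) + grp (A 2) + grp (A 3))
        - (grp (A 4) + grp (A 5) + grp (A 6) + grp (A 7)))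

end

/-! The two signed combinations `F₀ = D₀ + D₁ - D₂ - D₃` and `F₁ = D₀ + D₃ - D₁ - D₂` have
coefficients `±1` on `G*` (four indicators summing to `1` or `3` have signed sum `±1`), so
`Fᵢ = Eᵢ - (G* \ Eᵢ)` with `Eᵢ` the set where the coefficient is `1`. Expanding,
`F₀² + F₁² = 2 Σ Dᵢ² - 4 (D₀D₂ + D₁D₃) = 2v - 2G` by type `H` and (d3), and since
`Eᵢ + (G* \ Eᵢ) = G* = G - 1`, the parallelogram law `2 (E² + (G* \ E)²) = (E - (G* \ E))² + (G*)²`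
gives the claimed identity after dividing by `2`. -/

open AddMonoidAlgebra

section GroupRing

variable {G : Type*} [AddCommGroup G] [DecidableEq G]

lemma coeff_grp (D : Finset G) (x : G) : (grp D).coeff x = if x ∈ D then 1 else 0 := by
  simp [grp, coeff_sum, sum_apply', Finsupp.single_apply]

lemma mem_negSet {D : Finset G} {x : G} : x ∈ negSet D ↔ -x ∈ D := by
  simp [negSet, neg_eq_iff_eq_neg]

lemma IsSymmetric.neg_mem_iff {D : Finset G} (hD : IsSymmetric D) {x : G} : -x ∈ D ↔ x ∈ D := by
  rw [← mem_negSet, hD]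

lemma grp_sdiff {E S : Finset G} (h : E ⊆ S) : grp (S \ E) = grp S - grp E := by
  rw [eq_sub_iff_add_eq, grp, grp, grp, sum_sdiff h]

lemma coeff_grp_add_grp_sub_grp_sub_grp (A B C D : Finset G) (x : G) :
    (grp A + grp B - grp C - grp D).coeff x =
      (grp A).coeff x + (grp B).coeff x - (grp C).coeff x - (grp D).coeff x := by
  simp only [coeff_add, coeff_sub, Finsupp.add_apply, Finsupp.sub_apply]

lemma coeff_grp_add_grp_add_grp_add_grp (A B C D : Finset G) (x : G) :
    (grp A + grp B + grp C + grp D).coeff x =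
      (grp A).coeff x + (grp B).coeff x + (grp C).coeff x + (grp D).coeff x := by
  simp only [coeff_add, Finsupp.add_apply]

lemma coeff_signed_eq_one_or_neg_one {A B C D : Finset G} {x : G}
    (h : (grp A + grp B + grp C + grp D).coeff x = 1 ∨
      (grp A + grp B + grp C + grp D).coeff x = 3) :
    (grp A + grp B - grp C - grp D).coeff x = 1 ∨
      (grp A + grp B - grp C - grp D).coeff x = -1 := by
  simp only [coeff_grp_add_grp_add_grp_add_grp, coeff_grp_add_grp_sub_grp_sub_grp,
    coeff_grp] at h ⊢
  split_ifs at h ⊢ <;> omega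

lemma coeff_signed_eq_zero {A B C D : Finset G} {x : G}
    (h : (grp A + grp B + grp C + grp D).coeff x = 0) :
    (grp A + grp B - grp C - grp D).coeff x = 0 := by
  simp only [coeff_grp_add_grp_add_grp_add_grp, coeff_grp_add_grp_sub_grp_sub_grp,
    coeff_grp] at h ⊢
  split_ifs at h ⊢ <;> omega

lemma coeff_signed_neg {A B C D : Finset G} (hA : IsSymmetric A) (hB : IsSymmetric B)
    (hC : IsSymmetric C) (hD : IsSymmetric D) (x : G) :
    (grp A + grp B - grp C - grp D).coeff (-x) = (grp A + grp B - grp C - grp D).coeff x := by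
  simp only [coeff_grp_add_grp_sub_grp_sub_grp, coeff_grp, hA.neg_mem_iff, hB.neg_mem_iff,
    hC.neg_mem_iff, hD.neg_mem_iff]

variable [Fintype G]

lemma mem_Gstar {x : G} : x ∈ Gstar G ↔ x ≠ 0 := by
  simp [Gstar]

lemma grp_Gstar : grp (Gstar G) = grp (univ : Finset G) - 1 := by
  rw [Gstar, grp_sdiff (subset_univ _), one_def, grp, grp, sum_singleton]

lemma grp_univ_mul_grp_univ :
    grp (univ : Finset G) * grp univ = (Fintype.card G : ℤ) • grp (univ : Finset G) := by
  have hshift (x : G) : single x (1 : ℤ) * grp univ = grp univ := by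
    simp only [grp, mul_sum, single_mul_single, one_mul]
    exact Fintype.sum_equiv (Equiv.addLeft x) _ _ fun _ => rfl
  calc grp (univ : Finset G) * grp univ = ∑ x : G, single x (1 : ℤ) * grp univ := sum_mul _ _ _
    _ = _ := by simp only [hshift, sum_const, card_univ, natCast_zsmul]

lemma grp_Gstar_sq :
    grp (Gstar G) ^ 2 = ((Fintype.card G : ℤ) - 2) • grp (univ : Finset G) + 1 := by
  rw [grp_Gstar, sub_smul, sub_sq, ← grp_univ_mul_grp_univ]
  ring

def plusOneSet (F : AddMonoidAlgebra ℤ G) : Finset G :=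
  (Gstar G).filter fun x => F.coeff x = 1

lemma plusOneSet_subset (F : AddMonoidAlgebra ℤ G) : plusOneSet F ⊆ Gstar G :=
  filter_subset _ _

lemma isSymmetric_plusOneSet {F : AddMonoidAlgebra ℤ G} (hF : ∀ x, F.coeff (-x) = F.coeff x) :
    IsSymmetric (plusOneSet F) := by
  ext x
  simp only [mem_negSet, plusOneSet, mem_filter, mem_Gstar, neg_ne_zero, hF]

lemma eq_grp_plusOneSet_sub {F : AddMonoidAlgebra ℤ G} (h0 : F.coeff 0 = 0)
    (h : ∀ x, x ≠ 0 → F.coeff x = 1 ∨ F.coeff x = -1) :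
    F = grp (plusOneSet F) - grp (Gstar G \ plusOneSet F) := by
  ext x
  simp only [coeff_sub, Finsupp.sub_apply, coeff_grp, plusOneSet, mem_sdiff, mem_filter,
    mem_Gstar]
  by_cases hx : x = 0
  · simp [hx, h0]
  · rcases h x hx with h1 | h1 <;> simp [hx, h1]

lemma two_smul_sq_add_sq_compl {E : Finset G} (hE : E ⊆ Gstar G) :
    (2 : ℤ) • (grp E * grp E + grp (Gstar G \ E) * grp (Gstar G \ E)) =
      (grp E - grp (Gstar G \ E)) ^ 2 + grp (Gstar G) ^ 2 := by
  rw [grp_sdiff hE, two_zsmul]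
  ring

lemma sq_add_sq_of_isTypeH_of_condD3 {D : Fin 4 → Finset G} (hsym : ∀ i, IsSymmetric (D i))
    (hH : IsTypeH D) (hd3 : CondD3 D) :
    (grp (D 0) + grp (D 1) - grp (D 2) - grp (D 3)) ^ 2 +
        (grp (D 0) + grp (D 3) - grp (D 1) - grp (D 2)) ^ 2 =
      (2 * (Fintype.card G : ℤ)) • 1 - (2 : ℤ) • grp (univ : Finset G) := by
  unfold IsTypeH at hH
  unfold CondD3 at hd3
  have hneg (i : Fin 4) : negSet (D i) = D i := hsym i
  simp only [hneg, Fin.sum_univ_four, ← one_def] at hH hd3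
  simp only [zsmul_eq_mul] at hH hd3 ⊢
  push_cast at hH hd3 ⊢
  linear_combination 2 * hH - 2 * hd3

lemma sq_add_sq_add_sq_compl_add_sq_compl {E₀ E₁ : Finset G} (h₀ : E₀ ⊆ Gstar G)
    (h₁ : E₁ ⊆ Gstar G)
    (hsq : (grp E₀ - grp (Gstar G \ E₀)) ^ 2 + (grp E₁ - grp (Gstar G \ E₁)) ^ 2 =
      (2 * (Fintype.card G : ℤ)) • 1 - (2 : ℤ) • grp (univ : Finset G)) :
    grp E₀ * grp E₀ + grp E₁ * grp E₁ + grp (Gstar G \ E₀) * grp (Gstar G \ E₀)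
        + grp (Gstar G \ E₁) * grp (Gstar G \ E₁) =
      (2 * ((Fintype.card G : ℤ) - 1)) • single (0 : G) (1 : ℤ)
        + ((Fintype.card G : ℤ) - 3) • grp (Gstar G) := by
  apply smul_right_injective _ (two_ne_zero : (2 : ℤ) ≠ 0)
  have h₀' := two_smul_sq_add_sq_compl h₀
  have h₁' := two_smul_sq_add_sq_compl h₁
  rw [← one_def, grp_Gstar_sq, grp_Gstar] at *
  simp only [zsmul_eq_mul] at hsq h₀' h₁' ⊢
  push_cast at hsq h₀' h₁' ⊢
  linear_combination h₀' + h₁' + hsq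

end GroupRing

/-- existence of the witness sets `E₀, E₁` of condition (d2) from the
coefficient condition and (d3), for a symmetric type-`H` family. -/
theorem d2_witnesses_exist {G : Type*} [AddCommGroup G] [Fintype G] [DecidableEq G]
    (D : Fin 4 → Finset G)
    (hsym : ∀ i, IsSymmetric (D i)) (hH : IsTypeH D)
    (hcoeff : ∀ x : G, x ≠ 0 → (∑ i, grp (D i)).coeff x = 1 ∨ (∑ i, grp (D i)).coeff x = 3)
    (hcoeff0 : (∑ i, grp (D i)).coeff (0 : G) = 0)
    (hd3 : CondD3 D) :
    ∃ E₀ E₁ : Finset G, IsSymmetric E₀ ∧ IsSymmetric E₁ ∧ E₀ ⊆ Gstar G ∧ E₁ ⊆ Gstar G ∧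
      grp (D 0) + grp (D 1) - grp (D 2) - grp (D 3) = grp E₀ - grp (Gstar G \ E₀) ∧
      grp (D 0) + grp (D 3) - grp (D 1) - grp (D 2) = grp E₁ - grp (Gstar G \ E₁) ∧
      grp E₀ * grp E₀ + grp E₁ * grp E₁
          + grp (Gstar G \ E₀) * grp (Gstar G \ E₀)
          + grp (Gstar G \ E₁) * grp (Gstar G \ E₁) =
        (2 * ((Fintype.card G : ℤ) - 1)) • AddMonoidAlgebra.single (0 : G) (1 : ℤ)
          + ((Fintype.card G : ℤ) - 3) • grp (Gstar G) := by
  have hsum₀ : ∑ i, grp (D i) = grp (D 0) + grp (D 1) + grp (D 2) + grp (D 3) :=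
    Fin.sum_univ_four _
  have hsum₁ : ∑ i, grp (D i) = grp (D 0) + grp (D 3) + grp (D 1) + grp (D 2) := by
    rw [hsum₀]; abel
  have hF₀ := eq_grp_plusOneSet_sub (coeff_signed_eq_zero (hsum₀ ▸ hcoeff0))
    fun x hx => coeff_signed_eq_one_or_neg_one (hsum₀ ▸ hcoeff x hx)
  have hF₁ := eq_grp_plusOneSet_sub (coeff_signed_eq_zero (hsum₁ ▸ hcoeff0))
    fun x hx => coeff_signed_eq_one_or_neg_one (hsum₁ ▸ hcoeff x hx)
  refine ⟨_, _, isSymmetric_plusOneSet (coeff_signed_neg (hsym 0) (hsym 1) (hsym 2) (hsym 3)),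
    isSymmetric_plusOneSet (coeff_signed_neg (hsym 0) (hsym 3) (hsym 1) (hsym 2)),
    plusOneSet_subset _, plusOneSet_subset _, hF₀, hF₁, ?_⟩
  apply sq_add_sq_add_sq_compl_add_sq_compl (plusOneSet_subset _) (plusOneSet_subset _)
  rw [← hF₀, ← hF₁]
  exact sq_add_sq_of_isTypeH_of_condD3 hsym hH hd3
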